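/- arXiv:2502.04177 — 2 statements merged into one kernel-verified Lean document; each statement's English description precedes it below -/
import Mathlib

section
/- For every finite graph G and every integer r ≥ 0, the maximum order of a depth-r bramble of G is at most the strong (4r+1)-coloring number of G. That is, bn_r(G) ≤ scol_{4r+1}(G). -/
open SimpleGraph

variable {V : Type*}

/-- `B` induces a connected subgraph of `G`. -/
def ConnSet (G : SimpleGraph V) (B : Set V) : Prop := (G.induce B).Connected

/-- `B` induces a subgraph of `G` of radius at most `r`. -/
def RadiusLE (G : SimpleGraph V) (B : Set V) (r : ℕ) : Prop :=
  ∃ u : B, ∀ v : B, (G.induce B).dist u v ≤ r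

/-- Two vertex sets touch: they share a vertex or are joined by an edge. -/
def Touch (G : SimpleGraph V) (A B : Set V) : Prop :=
  (A ∩ B).Nonempty ∨ ∃ a ∈ A, ∃ b ∈ B, G.Adj a b

/-- A depth-`r` bramble. -/
def IsBramble (G : SimpleGraph V) (r : ℕ) (𝓑 : Finset (Set V)) : Prop :=
  (∀ B ∈ 𝓑, ConnSet G B ∧ RadiusLE G B r) ∧ ∀ B ∈ 𝓑, ∀ C ∈ 𝓑, Touch G B C

/-- A bramble with no bound on the radius of its elements. -/
def IsBrambleND (G : SimpleGraph V) (𝓑 : Finset (Set V)) : Prop :=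
  (∀ B ∈ 𝓑, ConnSet G B) ∧ ∀ B ∈ 𝓑, ∀ C ∈ 𝓑, Touch G B C

def IsHittingSet (𝓑 : Finset (Set V)) (X : Finset V) : Prop :=
  ∀ B ∈ 𝓑, ∃ x ∈ X, x ∈ B

/-- The order of a bramble: minimum size of a hitting set. -/
noncomputable def brambleOrder (𝓑 : Finset (Set V)) : ℕ :=
  sInf {n | ∃ X : Finset V, X.card = n ∧ IsHittingSet 𝓑 X}

/-- The depth-`r` bramble number. -/
noncomputable def bn (G : SimpleGraph V) (r : ℕ) : ℕ :=
  sSup {n | ∃ 𝓑 : Finset (Set V), IsBramble G r 𝓑 ∧ brambleOrder 𝓑 = n}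

/-- A depth-`r` `t`-bramble: any `t` (not necessarily distinct) elements intersect. -/
def IsTBramble (G : SimpleGraph V) (r t : ℕ) (𝓑 : Finset (Set V)) : Prop :=
  IsBramble G r 𝓑 ∧ ∀ f : Fin t → Set V, (∀ i, f i ∈ 𝓑) → (⋂ i, f i).Nonempty

/-- The depth-`r` `t`-bramble number. -/
noncomputable def bnT (G : SimpleGraph V) (r t : ℕ) : ℕ :=
  sSup {n | ∃ 𝓑 : Finset (Set V), IsTBramble G r t 𝓑 ∧ brambleOrder 𝓑 = n}

/-- A depth-`r` tangle. -/
def IsTangle (G : SimpleGraph V) (r : ℕ) (𝓑 : Finset (Set V)) : Prop :=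
  IsBramble G r 𝓑 ∧ ∀ T₁ ∈ 𝓑, ∀ T₂ ∈ 𝓑, ∀ T₃ ∈ 𝓑,
    (T₁ ∩ T₂ ∩ T₃).Nonempty ∨
      ∃ a b : V, G.Adj a b ∧ (a ∈ T₁ ∨ b ∈ T₁) ∧ (a ∈ T₂ ∨ b ∈ T₂) ∧ (a ∈ T₃ ∨ b ∈ T₃)

/-- The depth-`r` tangle number. -/
noncomputable def tn (G : SimpleGraph V) (r : ℕ) : ℕ :=
  sSup {n | ∃ 𝓑 : Finset (Set V), IsTangle G r 𝓑 ∧ brambleOrder 𝓑 = n}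

/-- The set of vertices strongly `k`-reachable from `v` w.r.t. the linear order
given by the embedding `π : V ↪ ℕ`. -/
def SReach (G : SimpleGraph V) (π : V ↪ ℕ) (k : ℕ) (v : V) : Set V :=
  {u | π u ≤ π v ∧ ∃ p : G.Walk v u, p.IsPath ∧ p.length ≤ k ∧
    ∀ w ∈ p.support, w ≠ v → w ≠ u → π v < π w}

/-- The strong `k`-coloring number. -/
noncomputable def scol (G : SimpleGraph V) (k : ℕ) : ℕ :=
  sInf {n | ∃ π : V ↪ ℕ, ∀ v : V, (SReach G π k v).ncard ≤ n}

/-- A depth-`r` minor-model of `H` in `G`. -/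
def IsMinorModel {W : Type*} (G : SimpleGraph V) (H : SimpleGraph W) (r : ℕ)
    (M : W → Set V) : Prop :=
  (∀ w, ConnSet G (M w) ∧ RadiusLE G (M w) r) ∧
  (Pairwise fun w w' => Disjoint (M w) (M w')) ∧
  ∀ ⦃w w'⦄, H.Adj w w' → ∃ a ∈ M w, ∃ b ∈ M w', G.Adj a b

/-- `ω_r(G)`: the largest `t` such that `K_t` is a depth-`r` minor of `G`. -/
noncomputable def cliqueMinorNum (G : SimpleGraph V) (r : ℕ) : ℕ :=
  sSup {t | ∃ M : Fin t → Set V, IsMinorModel G (⊤ : SimpleGraph (Fin t)) r M}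

/-- `grid_r(G)`: the largest `t` such that the `t × t` grid is a depth-`r` minor of `G`. -/
noncomputable def gridMinorNum (G : SimpleGraph V) (r : ℕ) : ℕ :=
  sSup {t | ∃ M : Fin t × Fin t → Set V,
    IsMinorModel G (SimpleGraph.pathGraph t □ SimpleGraph.pathGraph t) r M}

/-- `S` is depth-`r` `k`-linked. -/
def IsLinkedSet (G : SimpleGraph V) (r k : ℕ) (S : Set V) : Prop :=
  ∀ X : Finset V, X.card < k →
    ∃ B : Set V, (∀ x ∈ X, x ∉ B) ∧ ConnSet G B ∧ RadiusLE G B r ∧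
      S.ncard < 2 * (S ∩ B).ncard

/-- The depth-`r` linkedness of `G`. -/
noncomputable def linkNum (G : SimpleGraph V) (r : ℕ) : ℕ :=
  sSup {k | ∃ S : Set V, IsLinkedSet G r k S}

/-- `S` is depth-`r` well-linked. -/
def IsWellLinkedSet (G : SimpleGraph V) (r : ℕ) (S : Set V) : Prop :=
  ∀ A B : Finset V, ↑A ⊆ S → ↑B ⊆ S → A.card = B.card →
    ∀ Y : Finset V, Y.card < A.card →
      ∃ (a b : V) (p : G.Walk a b), a ∈ A ∧ b ∈ B ∧ p.IsPath ∧ p.length ≤ r ∧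
        ∀ w ∈ p.support, w ∉ Y

/-- The depth-`r` well-linkedness of `G`. -/
noncomputable def wellNum (G : SimpleGraph V) (r : ℕ) : ℕ :=
  sSup {n | ∃ S : Set V, IsWellLinkedSet G r S ∧ S.ncard = n}

/-!
Fix an order `π` attaining `scol_{4r+1}(G)` and, in a bramble, let `m(B)` be the `π`-least vertex
of `B`. Choose `B₀` with `m(B₀)` as late as possible and put `v = m(B₀)`. For any other `C`, a
path inside `B₀ ∪ C` leads from `v` to `m(C)` in at most `2r + 1 + 2r` steps (radius `r` on
each side, one edge where they touch), and ends at a vertex not later than `v`. The first vertex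
after `v` on it that is not later than `v` is strongly `(4r+1)`-reachable from `v`, and it lies in
`C`, since every other vertex of `B₀` is later than `v`. So the strongly reachable set of `v` hits
the bramble.
-/

theorem ConnSet.exists_walk_length_le {G : SimpleGraph V} {B : Set V} {r : ℕ}
    (hc : ConnSet G B) (hr : RadiusLE G B r) {x y : V} (hx : x ∈ B) (hy : y ∈ B) :
    ∃ p : G.Walk x y, p.length ≤ 2 * r ∧ ∀ z ∈ p.support, z ∈ B := by
  obtain ⟨u, hu⟩ := hr
  obtain ⟨p, hp⟩ := (hc.preconnected u ⟨x, hx⟩).exists_walk_length_eq_dist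
  obtain ⟨q, hq⟩ := (hc.preconnected u ⟨y, hy⟩).exists_walk_length_eq_dist
  let w := (p.reverse.append q).map (Embedding.induce B).toHom
  have hw : w.length ≤ 2 * r := by
    have := hu ⟨x, hx⟩
    have := hu ⟨y, hy⟩
    simp only [w, Walk.length_map, Walk.length_append, Walk.length_reverse]
    omega
  refine ⟨w, hw, fun z hz => ?_⟩
  obtain ⟨z', -, rfl⟩ := List.mem_map.mp ((Walk.support_map _ _) ▸ hz)
  exact z'.2

theorem Touch.exists_isPath_length_le {G : SimpleGraph V} {A B : Set V} {r : ℕ}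
    (h : Touch G A B) (hA : ConnSet G A) (hAr : RadiusLE G A r) (hB : ConnSet G B)
    (hBr : RadiusLE G B r) {a b : V} (ha : a ∈ A) (hb : b ∈ B) :
    ∃ p : G.Walk a b, p.IsPath ∧ p.length ≤ 4 * r + 1 ∧ ∀ z ∈ p.support, z ∈ A ∪ B := by
  classical
  suffices ∃ p : G.Walk a b, p.length ≤ 4 * r + 1 ∧ ∀ z ∈ p.support, z ∈ A ∪ B by
    obtain ⟨p, hp, hpAB⟩ := this
    exact ⟨p.bypass, p.bypass_isPath, p.length_bypass_le_length.trans hp,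
      fun z hz => hpAB z (p.support_bypass_subset_support hz)⟩
  rcases h with ⟨x, hxA, hxB⟩ | ⟨x, hxA, y, hyB, hxy⟩
  · obtain ⟨p, hp, hpA⟩ := hA.exists_walk_length_le hAr ha hxA
    obtain ⟨q, hq, hqB⟩ := hB.exists_walk_length_le hBr hxB hb
    refine ⟨p.append q, by rw [Walk.length_append]; omega, fun z hz => ?_⟩
    rcases (Walk.mem_support_append_iff _ _).mp hz with hz | hz
    exacts [Or.inl (hpA z hz), Or.inr (hqB z hz)]
  · obtain ⟨p, hp, hpA⟩ := hA.exists_walk_length_le hAr ha hxA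
    obtain ⟨q, hq, hqB⟩ := hB.exists_walk_length_le hBr hyB hb
    refine ⟨p.append (.cons hxy q), by simp only [Walk.length_append, Walk.length_cons]; omega,
      fun z hz => ?_⟩
    rcases (Walk.mem_support_append_iff _ _).mp hz with hz | hz
    · exact Or.inl (hpA z hz)
    · rcases List.mem_cons.mp (Walk.support_cons hxy q ▸ hz) with hzx | hz
      exacts [Or.inl (hzx ▸ hxA), Or.inr (hqB z hz)]

section StrongReach

variable {G : SimpleGraph V} (π : V ↪ ℕ)

theorem SimpleGraph.Walk.exists_first_vertex_le (v : V) :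
    ∀ {a u : V} (q : G.Walk a u), π u ≤ π v → ¬q.Nil →
      ∃ w ∈ q.support.tail, π w ≤ π v ∧ ∃ p : G.Walk a w, p.length ≤ q.length ∧
        ∀ x ∈ p.support.tail, x ≠ w → π v < π x
  | _, _, .nil, _, hq => (hq .nil).elim
  | _, _, .cons (v := b) hab q, hu, _ => by
    by_cases hb : π b ≤ π v
    · exact ⟨b, by simp, hb, .cons hab .nil, by simp, by simp⟩
    · have hq : ¬q.Nil := fun hq => hb (hq.eq ▸ hu)
      obtain ⟨w, hw, hwv, p, hp, hpv⟩ := exists_first_vertex_le v q hu hq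
      refine ⟨w, List.mem_of_mem_tail hw, hwv, .cons hab p, by simpa using hp, fun x hx hxw => ?_⟩
      rw [Walk.support_cons, List.tail_cons, Walk.mem_support_iff] at hx
      rcases hx with rfl | hx
      exacts [not_le.mp hb, hpv x hx hxw]

variable {k : ℕ} {v : V}

theorem mem_sReach_of_walk {w : V} (p : G.Walk v w) (hw : π w ≤ π v) (hk : p.length ≤ k)
    (hp : ∀ x ∈ p.support.tail, x ≠ w → π v < π x) : w ∈ SReach G π k v := by
  classical
  exact ⟨hw, p.bypass, p.bypass_isPath, p.length_bypass_le_length.trans hk, fun x hx hxv hxw =>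
      hp x ((p.mem_support_iff.mp (p.support_bypass_subset_support hx)).resolve_left hxv) hxw⟩

theorem exists_mem_sReach_of_isPath {A C : Set V} {c : V} (hA : ∀ x ∈ A, π v ≤ π x)
    (hc : c ∈ C) (hcv : π c ≤ π v) (q : G.Walk v c) (hq : q.IsPath) (hk : q.length ≤ k)
    (hqAC : ∀ x ∈ q.support, x ∈ A ∪ C) : ∃ w ∈ SReach G π k v, w ∈ C := by
  by_cases hnil : q.Nil
  · obtain rfl := hnil.eq
    exact ⟨v, mem_sReach_of_walk π .nil le_rfl (Nat.zero_le _) (by simp), hc⟩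
  obtain ⟨w, hwq, hwv, p, hp, hpv⟩ := q.exists_first_vertex_le π v hcv hnil
  have hw_ne : w ≠ v := by
    have hnodup := hq.support_nodup
    rw [← q.cons_tail_support, List.nodup_cons] at hnodup
    exact fun h => hnodup.1 (h ▸ hwq)
  refine ⟨w, mem_sReach_of_walk π p hwv (hp.trans hk) hpv, ?_⟩
  rcases hqAC w (List.mem_of_mem_tail hwq) with hwA | hwC
  exacts [absurd (π.injective (le_antisymm hwv (hA w hwA))) hw_ne, hwC]

theorem IsBramble.exists_sReach_hits {r : ℕ} {𝓑 : Finset (Set V)} (h𝓑 : IsBramble G r 𝓑)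
    (hne : 𝓑.Nonempty) : ∃ v, ∀ C ∈ 𝓑, ∃ w ∈ SReach G π (4 * r + 1) v, w ∈ C := by
  have hmin : ∀ B ∈ 𝓑, ∃ b ∈ B, ∀ x ∈ B, π b ≤ π x := fun B hB => by
    obtain ⟨b, hb⟩ := Set.nonempty_coe_sort.mp (h𝓑.1 B hB).1.nonempty
    exact ⟨_, Function.argminOn_mem π B ⟨b, hb⟩, fun x hx => Function.argminOn_le π B hx⟩
  have : Nonempty V := hne.elim fun B hB => (h𝓑.1 B hB).1.nonempty.map Subtype.val
  choose! m hmB hmin using hmin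
  obtain ⟨B₀, hB₀, hmax⟩ := 𝓑.exists_max_image (fun B => π (m B)) hne
  refine ⟨m B₀, fun C hC => ?_⟩
  obtain ⟨q, hq, hqk, hqBC⟩ := (h𝓑.2 B₀ hB₀ C hC).exists_isPath_length_le (h𝓑.1 B₀ hB₀).1
    (h𝓑.1 B₀ hB₀).2 (h𝓑.1 C hC).1 (h𝓑.1 C hC).2 (hmB B₀ hB₀) (hmB C hC)
  exact exists_mem_sReach_of_isPath π (hmin B₀ hB₀) (hmB C hC) (hmax C hC) q hq hqk hqBC

end StrongReach

theorem exists_sReach_ncard_le_scol [Finite V] (G : SimpleGraph V) (k : ℕ) :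
    ∃ π : V ↪ ℕ, ∀ v, (SReach G π k v).ncard ≤ scol G k := by
  obtain ⟨π⟩ := nonempty_embedding_nat V
  exact Nat.sInf_mem (s := {n | ∃ π : V ↪ ℕ, ∀ v, (SReach G π k v).ncard ≤ n})
    ⟨Nat.card V, π, fun _ => Set.ncard_le_card _⟩

theorem brambleOrder_le_ncard {𝓑 : Finset (Set V)} {X : Set V} (hX : X.Finite)
    (h : ∀ B ∈ 𝓑, ∃ x ∈ X, x ∈ B) : brambleOrder 𝓑 ≤ X.ncard :=
  Nat.sInf_le ⟨hX.toFinset, (Set.ncard_eq_toFinset_card X hX).symm,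
    fun B hB => by simpa using h B hB⟩

/-- `bn_r(G) ≤ scol_{4r+1}(G)`. -/
theorem bn_le_scol {V : Type*} [Fintype V] (G : SimpleGraph V) (r : ℕ) :
    bn G r ≤ scol G (4 * r + 1) := by
  obtain ⟨π, hπ⟩ := exists_sReach_ncard_le_scol G (4 * r + 1)
  refine csSup_le' ?_
  rintro _ ⟨𝓑, h𝓑, rfl⟩
  rcases 𝓑.eq_empty_or_nonempty with rfl | hne
  · exact (brambleOrder_le_ncard Set.finite_empty (by simp)).trans (by simp)
  · obtain ⟨v, hv⟩ := h𝓑.exists_sReach_hits π hne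
    exact (brambleOrder_le_ncard (Set.toFinite _) hv).trans (hπ v)
end

section
/- For every finite graph G and integer r ≥ 0, the depth-r linkedness of G is at most the depth-r bramble number of G: link_r(G) ≤ bn_r(G). -/
open SimpleGraph

variable {V : Type*}

/-!
If `S` is depth-`r` `k`-linked, the connected sets of radius at most `r` that contain a strict
majority of `S` pairwise intersect, so they form a depth-`r` bramble. Linkedness says precisely
that no set of fewer than `k` vertices hits all of them, so this bramble has order at least `k`.
-/

theorem Set.inter_nonempty_of_ncard_lt_ncard_add_ncard {s t u : Set V} (hs : s.Finite)
    (hts : t ⊆ s) (hus : u ⊆ s) (h : s.ncard < t.ncard + u.ncard) : (t ∩ u).Nonempty := by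
  have hunion : (t ∪ u).ncard ≤ s.ncard := Set.ncard_le_ncard (Set.union_subset hts hus) hs
  have hsum := Set.ncard_union_add_ncard_inter t u (hs.subset hts) (hs.subset hus)
  exact Set.nonempty_of_ncard_ne_zero (by omega)

section Bramble

variable {G : SimpleGraph V} {r : ℕ} {𝓑 : Finset (Set V)}

theorem ConnSet.nonempty {B : Set V} (h : ConnSet G B) : B.Nonempty :=
  Set.nonempty_coe_sort.1 (SimpleGraph.Connected.nonempty h)

theorem isHittingSet_univ [Fintype V] (h𝓑 : ∀ B ∈ 𝓑, B.Nonempty) :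
    IsHittingSet 𝓑 Finset.univ := fun B hB =>
  let ⟨x, hx⟩ := h𝓑 B hB
  ⟨x, Finset.mem_univ x, hx⟩

theorem le_brambleOrder [Fintype V] {k : ℕ} (h𝓑 : ∀ B ∈ 𝓑, B.Nonempty)
    (hk : ∀ X : Finset V, IsHittingSet 𝓑 X → k ≤ X.card) : k ≤ brambleOrder 𝓑 :=
  le_csInf ⟨_, Finset.univ, rfl, isHittingSet_univ h𝓑⟩ fun _ ⟨X, hX, hhit⟩ => hX ▸ hk X hhit

theorem brambleOrder_le_card [Fintype V] (h𝓑 : ∀ B ∈ 𝓑, B.Nonempty) :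
    brambleOrder 𝓑 ≤ Fintype.card V :=
  Nat.sInf_le ⟨Finset.univ, Finset.card_univ, isHittingSet_univ h𝓑⟩

theorem IsBramble.brambleOrder_le_bn [Fintype V] (h𝓑 : IsBramble G r 𝓑) :
    brambleOrder 𝓑 ≤ bn G r := by
  have hbdd : BddAbove {n | ∃ 𝓑 : Finset (Set V), IsBramble G r 𝓑 ∧ brambleOrder 𝓑 = n} := by
    refine ⟨Fintype.card V, ?_⟩
    rintro _ ⟨𝓒, h𝓒, rfl⟩
    exact brambleOrder_le_card fun B hB => (h𝓒.1 B hB).1.nonempty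
  exact le_csSup hbdd ⟨𝓑, h𝓑, rfl⟩

end Bramble

section MajorityBramble

variable [Fintype V] (G : SimpleGraph V) (r : ℕ) (S : Set V)

open Classical in
noncomputable def majorityBramble : Finset (Set V) :=
  Finset.univ.filter fun B => ConnSet G B ∧ RadiusLE G B r ∧ S.ncard < 2 * (S ∩ B).ncard

variable {G r S}

theorem mem_majorityBramble {B : Set V} :
    B ∈ majorityBramble G r S ↔
      ConnSet G B ∧ RadiusLE G B r ∧ S.ncard < 2 * (S ∩ B).ncard := by
  simp [majorityBramble]

theorem isBramble_majorityBramble : IsBramble G r (majorityBramble G r S) := by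
  refine ⟨fun B hB => ?_, fun B hB C hC => Or.inl ?_⟩
  · obtain ⟨hconn, hrad, -⟩ := mem_majorityBramble.1 hB
    exact ⟨hconn, hrad⟩
  · have hBmaj := (mem_majorityBramble.1 hB).2.2
    have hCmaj := (mem_majorityBramble.1 hC).2.2
    obtain ⟨x, ⟨-, hxB⟩, -, hxC⟩ := Set.inter_nonempty_of_ncard_lt_ncard_add_ncard
      S.toFinite (Set.inter_subset_left (t := B)) (Set.inter_subset_left (t := C)) (by omega)
    exact ⟨x, hxB, hxC⟩

theorem IsLinkedSet.le_brambleOrder_majorityBramble {k : ℕ} (hS : IsLinkedSet G r k S) :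
    k ≤ brambleOrder (majorityBramble G r S) := by
  refine le_brambleOrder (fun B hB => ?_) fun X hX => ?_
  · have hmaj := (mem_majorityBramble.1 hB).2.2
    exact (Set.nonempty_of_ncard_ne_zero (by omega : (S ∩ B).ncard ≠ 0)).mono
      Set.inter_subset_right
  · by_contra! hcard
    obtain ⟨B, hBX, hconn, hrad, hmaj⟩ := hS X hcard
    obtain ⟨x, hxX, hxB⟩ := hX B (mem_majorityBramble.2 ⟨hconn, hrad, hmaj⟩)
    exact hBX x hxX hxB

end MajorityBramble

/-- `link_r(G) ≤ bn_r(G)`. -/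
theorem linkNum_le_bn {V : Type*} [Fintype V] (G : SimpleGraph V) (r : ℕ) :
    linkNum G r ≤ bn G r := by
  refine csSup_le ⟨0, ∅, fun X hX => absurd hX (Nat.not_lt_zero _)⟩ ?_
  rintro k ⟨S, hS⟩
  exact hS.le_brambleOrder_majorityBramble.trans isBramble_majorityBramble.brambleOrder_le_bn
end
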